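/- Let F be a field. Let G, H ∈ F[x₁,…,xₙ,y] be monic in y with 1 ≤ deg_y G ≤ d_y and 1 ≤ deg_y H ≤ d_y, and with total degree in the variables x₁,…,xₙ at most d. Suppose there exist φ ∈ F[x₁,…,xₙ] and an integer k > 2·d_y·d such that both G(x,φ(x)) and H(x,φ(x)) lie in ⟨x₁,…,xₙ⟩^k. Then G and H have a common non-unit factor in F[x₁,…,xₙ,y]. -/

import Mathlib

/-!
If `G` and `H` had no common non-unit factor, their resultant `Res_y(G, H)` would be a nonzero
polynomial in `x`. It is an `F[x][y]`-combination `A G + B H`, so substituting `y := φ(x)` puts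
it in `⟨x₁,…,xₙ⟩^k`, forcing its total degree to be at least `k`. But it is the determinant of the
Sylvester matrix, of size `deg_y G + deg_y H ≤ 2 d_y` with entries of total degree at most `d`,
so its total degree is at most `2 d_y d < k`.
-/

open Polynomial

namespace MvPolynomial

variable {σ R : Type*} [CommRing R]

theorem totalDegree_det_le {ι : Type*} [Fintype ι] [DecidableEq ι]
    (M : Matrix ι ι (MvPolynomial σ R)) {d : ℕ} (hM : ∀ i j, (M i j).totalDegree ≤ d) :
    M.det.totalDegree ≤ Fintype.card ι * d := by
  rw [Matrix.det_apply]
  refine (totalDegree_finsetSum _ _).trans (Finset.sup_le fun e _ => ?_)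
  have hprod : (∏ i, M (e i) i).totalDegree ≤ Fintype.card ι * d :=
    (totalDegree_finsetProd _ _).trans <| by
      simpa using Finset.sum_le_sum fun i (_ : i ∈ Finset.univ) => hM (e i) i
  rcases Int.units_eq_one_or (Equiv.Perm.sign e) with h | h <;>
    simpa [h, Units.smul_def, totalDegree_neg] using hprod

theorem le_totalDegree_of_mem_pow_idealOfVars {p : MvPolynomial σ R} {k : ℕ}
    (h : p ∈ idealOfVars σ R ^ k) (hp : p ≠ 0) : k ≤ p.totalDegree := by
  obtain ⟨s, hs⟩ := support_nonempty.mpr hp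
  exact ((mem_pow_idealOfVars_iff k p).mp h s hs).trans (le_totalDegree hs)

end MvPolynomial

namespace Polynomial

variable {R : Type*} [CommRing R]

theorem eq_zero_of_mul_add_mul_eq_zero_of_isRelPrime [IsDomain R] [DecompositionMonoid R[X]]
    {f g p q : R[X]} (hg : g ≠ 0) (hfg : IsRelPrime f g) (hq : q.degree < g.natDegree)
    (h : f * q + g * p = 0) : p = 0 ∧ q = 0 := by
  have hgq : g ∣ q := hfg.symm.dvd_of_dvd_mul_left ⟨-p, by linear_combination h⟩
  obtain rfl : q = 0 := eq_zero_of_dvd_of_degree_lt hgq (hq.trans_eq (degree_eq_natDegree hg).symm)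
  exact ⟨(mul_eq_zero.mp (by simpa using h)).resolve_left hg, rfl⟩

theorem resultant_ne_zero_of_isRelPrime [IsDomain R] [DecompositionMonoid R[X]]
    {f g : R[X]} (hg : g ≠ 0) (hfg : IsRelPrime f g) : f.resultant g ≠ 0 := by
  intro h0
  let b := ((degreeLT.basis R f.natDegree).prod (degreeLT.basis R g.natDegree)).reindex
    finSumFinEquiv
  obtain ⟨v, hv, hSv⟩ := Matrix.exists_mulVec_eq_zero_iff.mpr h0
  -- a kernel vector of the Sylvester matrix is a pair `(p, q)` with `f * q + g * p = 0`
  set x := b.equivFun.symm v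
  have hx : sylvesterMap f g le_rfl le_rfl x = 0 := by
    have :=
      LinearMap.toMatrix_mulVec_repr b (degreeLT.basis R _) (sylvesterMap f g le_rfl le_rfl) x
    rw [toMatrix_sylvesterMap'] at this
    have hrepr : ⇑(b.repr x) = v := by rw [← b.equivFun_apply]; exact b.equivFun.apply_symm_apply v
    rw [hrepr, hSv] at this
    simpa using this.symm
  have hx0 : x = 0 := by
    obtain ⟨⟨p, hp⟩, ⟨q, hq⟩⟩ := x
    have h := congrArg Subtype.val hx
    simp only [sylvesterMap_apply_coe, ZeroMemClass.coe_zero] at h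
    obtain ⟨rfl, rfl⟩ :=
      eq_zero_of_mul_add_mul_eq_zero_of_isRelPrime hg hfg (mem_degreeLT.mp hq) h
    rfl
  exact hv (b.equivFun.symm.map_eq_zero_iff.mp hx0)

theorem resultant_mem_of_eval_mem {I : Ideal R} {f g : R[X]} {x : R}
    (hdeg : f.natDegree ≠ 0 ∨ g.natDegree ≠ 0) (hf : f.eval x ∈ I) (hg : g.eval x ∈ I) :
    f.resultant g ∈ I := by
  obtain ⟨p, q, -, -, h⟩ := exists_mul_add_mul_eq_C_resultant f g le_rfl le_rfl hdeg
  have := congrArg (eval x) h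
  rw [eval_C, eval_add, eval_mul, eval_mul] at this
  exact this ▸ I.add_mem (I.mul_mem_right _ hf) (I.mul_mem_right _ hg)

theorem totalDegree_resultant_le {σ : Type*} {f g : (MvPolynomial σ R)[X]} (m n : ℕ) {d : ℕ}
    (hf : ∀ i, (f.coeff i).totalDegree ≤ d) (hg : ∀ i, (g.coeff i).totalDegree ≤ d) :
    (f.resultant g m n).totalDegree ≤ (m + n) * d := by
  refine (MvPolynomial.totalDegree_det_le (d := d) _ fun i j => ?_).trans (by simp)
  induction j using Fin.addCases <;>
    simp only [sylvester, Matrix.of_apply, Fin.addCases_left, Fin.addCases_right] <;>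
    split_ifs <;> simp [hf, hg]

end Polynomial

theorem stmt10_general {n : ℕ} {F : Type*} [Field F]
    (G H : Polynomial (MvPolynomial (Fin n) F)) (d_y d : ℕ)
    (hGdeg2 : G.natDegree ≤ d_y)
    (hGcoeff : ∀ i, (G.coeff i).totalDegree ≤ d)
    (hHdeg1 : 1 ≤ H.natDegree) (hHdeg2 : H.natDegree ≤ d_y)
    (hHcoeff : ∀ i, (H.coeff i).totalDegree ≤ d)
    (hex : ∃ (φ : MvPolynomial (Fin n) F) (k : ℕ), 2 * d_y * d < k ∧
      Polynomial.eval φ G ∈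
        (Ideal.span (Set.range (MvPolynomial.X : Fin n → MvPolynomial (Fin n) F))) ^ k ∧
      Polynomial.eval φ H ∈
        (Ideal.span (Set.range (MvPolynomial.X : Fin n → MvPolynomial (Fin n) F))) ^ k) :
    ∃ p : Polynomial (MvPolynomial (Fin n) F), ¬ IsUnit p ∧ p ∣ G ∧ p ∣ H := by
  by_contra! hcon
  have hrel : IsRelPrime G H := fun p hpG hpH => not_not.mp fun hp => hcon p hp hpG hpH
  obtain ⟨φ, k, hk, hGφ, hHφ⟩ := hex
  have hH0 : H ≠ 0 := ne_zero_of_natDegree_gt hHdeg1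
  have hres : k ≤ (G.resultant H).totalDegree :=
    MvPolynomial.le_totalDegree_of_mem_pow_idealOfVars
      (resultant_mem_of_eval_mem (.inr (by omega)) hGφ hHφ)
      (resultant_ne_zero_of_isRelPrime hH0 hrel)
  have hdeg := totalDegree_resultant_le G.natDegree H.natDegree hGcoeff hHcoeff
  have hsize : (G.natDegree + H.natDegree) * d ≤ 2 * d_y * d := Nat.mul_le_mul_right d (by omega)
  omega

/-- if `G, H` are monic in `y` with `1 ≤ deg_y ≤ d_y` and
`x`-degree at most `d`, and there are `φ` and `k > 2·d_y·d` with both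
`G(x,φ(x))` and `H(x,φ(x))` in `⟨x₁,…,xₙ⟩^k`, then `G` and `H` have a common
non-unit factor. -/
theorem stmt10 {n : ℕ} {F : Type*} [Field F]
    (G H : Polynomial (MvPolynomial (Fin n) F)) (d_y d : ℕ)
    (hGmonic : G.Monic) (hGdeg1 : 1 ≤ G.natDegree) (hGdeg2 : G.natDegree ≤ d_y)
    (hGcoeff : ∀ i, (G.coeff i).totalDegree ≤ d)
    (hHmonic : H.Monic) (hHdeg1 : 1 ≤ H.natDegree) (hHdeg2 : H.natDegree ≤ d_y)
    (hHcoeff : ∀ i, (H.coeff i).totalDegree ≤ d)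
    (hex : ∃ (φ : MvPolynomial (Fin n) F) (k : ℕ), 2 * d_y * d < k ∧
      Polynomial.eval φ G ∈
        (Ideal.span (Set.range (MvPolynomial.X : Fin n → MvPolynomial (Fin n) F))) ^ k ∧
      Polynomial.eval φ H ∈
        (Ideal.span (Set.range (MvPolynomial.X : Fin n → MvPolynomial (Fin n) F))) ^ k) :
    ∃ p : Polynomial (MvPolynomial (Fin n) F), ¬ IsUnit p ∧ p ∣ G ∧ p ∣ H :=
  stmt10_general G H d_y d hGdeg2 hGcoeff hHdeg1 hHdeg2 hHcoeff hex
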